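/- arXiv:1807.02093 — 6 statements merged into one kernel-verified Lean document; each statement's English description precedes it below -/
import Mathlib

section
/- Let m ≥ 2 and let x₁, …, xₘ be affinely independent points of a real Hilbert space H. Let G = G(x₂ − x₁, …, xₘ − x₁) be the Gram matrix of the differences (which is invertible since these differences are linearly independent), and define (α₁, …, α_{m−1})ᵀ = (1/2) G⁻¹ (‖x₂ − x₁‖², …, ‖xₘ − x₁‖²)ᵀ. Then the point p = x₁ + Σ_{i=1}^{m−1} αᵢ (x_{i+1} − x₁) lies in aff{x₁, …, xₘ} and satisfies ‖p − x₁‖ = ⋯ = ‖p − xₘ‖; that is, p is the circumcenter of {x₁, …, xₘ}. -/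
open RealInnerProductSpace Matrix

/-! With `vᵢ = xᵢ₊₁ − x₀` and `w = Σ αⱼ vⱼ`, the defining equation `G α = ½ (‖vᵢ‖²)ᵢ` says
exactly `⟪w, vᵢ⟫ = ½ ‖vᵢ‖²`, which by expanding `‖w − vᵢ‖²` is `‖w − vᵢ‖ = ‖w‖`: the point
`x₀ + w` is as far from `xᵢ₊₁ = x₀ + vᵢ` as from `x₀`. Affine independence makes the `vᵢ`
linearly independent, so their Gram matrix is invertible and `G⁻¹` is not a junk value. -/

theorem AffineIndependent.linearIndependent_succ_vsub_zero {k V P : Type*} [Ring k]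
    [AddCommGroup V] [Module k V] [AddTorsor V P] {n : ℕ} {p : Fin (n + 1) → P}
    (hp : AffineIndependent k p) :
    LinearIndependent k fun i : Fin n => p i.succ -ᵥ p 0 :=
  ((affineIndependent_iff_linearIndependent_vsub k p 0).1 hp).comp
    (fun i => ⟨i.succ, i.succ_ne_zero⟩) fun _ _ h => Fin.succ_injective _ (congrArg Subtype.val h)

theorem add_sum_smul_sub_mem_affineSpan {k E : Type*} [Ring k] [AddCommGroup E] [Module k E]
    {n : ℕ} (x : Fin (n + 1) → E) (α : Fin n → k) :
    x 0 + ∑ i, α i • (x i.succ - x 0) ∈ affineSpan k (Set.range x) := by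
  have hdir : ∑ i, α i • (x i.succ - x 0) ∈ (affineSpan k (Set.range x)).direction := by
    rw [direction_affineSpan]
    exact Submodule.sum_mem _ fun i _ =>
      Submodule.smul_mem _ _ (vsub_mem_vectorSpan k ⟨i.succ, rfl⟩ ⟨0, rfl⟩)
  rw [add_comm (x 0)]
  exact AffineSubspace.vadd_mem_of_mem_direction hdir (mem_affineSpan k ⟨0, rfl⟩)

theorem inner_sum_smul_eq_gram_mulVec {𝕜 E ι : Type*} [RCLike 𝕜] [SeminormedAddCommGroup E]
    [InnerProductSpace 𝕜 E] [Fintype ι] (v : ι → E) (α : ι → 𝕜) (i : ι) :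
    inner 𝕜 (v i) (∑ j, α j • v j) = (gram 𝕜 v *ᵥ α) i := by
  simp only [inner_sum, inner_smul_right, mulVec, dotProduct, gram_apply]
  exact Finset.sum_congr rfl fun _ _ => mul_comm _ _

theorem norm_sub_eq_norm_of_inner_eq {F : Type*} [SeminormedAddCommGroup F]
    [InnerProductSpace ℝ F] {w v : F} (h : ⟪w, v⟫ = 2⁻¹ * ‖v‖ ^ 2) : ‖w - v‖ = ‖w‖ := by
  refine (sq_eq_sq₀ (norm_nonneg _) (norm_nonneg _)).1 ?_
  rw [norm_sub_sq_real, h]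
  ring

theorem norm_sum_smul_sub_eq_norm_of_gram_mulVec {F ι : Type*} [SeminormedAddCommGroup F]
    [InnerProductSpace ℝ F] [Fintype ι] {v : ι → F} {α : ι → ℝ}
    (hα : gram ℝ v *ᵥ α = (2 : ℝ)⁻¹ • fun i => ‖v i‖ ^ 2) (i : ι) :
    ‖∑ j, α j • v j - v i‖ = ‖∑ j, α j • v j‖ := by
  refine norm_sub_eq_norm_of_inner_eq ?_
  rw [real_inner_comm, inner_sum_smul_eq_gram_mulVec, hα]
  rfl

theorem circumcenter_formula_gram_general {H : Type*} [NormedAddCommGroup H]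
    [InnerProductSpace ℝ H] (n : ℕ)
    (x : Fin (n + 1) → H) (hx : AffineIndependent ℝ x)
    (G : Matrix (Fin n) (Fin n) ℝ)
    (hG : ∀ i j, G i j = ⟪x i.succ - x 0, x j.succ - x 0⟫)
    (α : Fin n → ℝ)
    (hα : α = (2 : ℝ)⁻¹ • G⁻¹.mulVec fun i => ‖x i.succ - x 0‖ ^ 2) :
    (x 0 + ∑ i, α i • (x i.succ - x 0)) ∈ affineSpan ℝ (Set.range x) ∧
      ∃ r : ℝ, ∀ i, dist (x 0 + ∑ i, α i • (x i.succ - x 0)) (x i) = r := by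
  set v : Fin n → H := fun i => x i.succ - x 0
  have hGv : G = gram ℝ v := Matrix.ext hG
  have hv : LinearIndependent ℝ v := by
    simpa only [vsub_eq_sub] using hx.linearIndependent_succ_vsub_zero
  have hdet : IsUnit G.det := by
    rw [hGv, isUnit_iff_ne_zero]
    exact det_gram_ne_zero_iff_linearIndependent.2 hv
  have hGα : gram ℝ v *ᵥ α = (2 : ℝ)⁻¹ • fun i => ‖v i‖ ^ 2 := by
    rw [← hGv, hα, mulVec_smul, mulVec_mulVec, mul_nonsing_inv _ hdet, one_mulVec]
  refine ⟨add_sum_smul_sub_mem_affineSpan x α, ‖∑ i, α i • v i‖, Fin.cases ?_ fun j => ?_⟩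
  · rw [dist_eq_norm, add_sub_cancel_left]
  · rw [dist_eq_norm, ← norm_sum_smul_sub_eq_norm_of_gram_mulVec hGα j]
    congr 1
    simp only [v]
    abel

/-- Explicit formula for the circumcenter of `m = n + 1 ≥ 2` affinely
independent points `x 0, …, x n` of a real Hilbert space.  With `G` the Gram matrix of
the differences `x (i+1) − x 0` and
`α = (1/2) G⁻¹ (‖x 1 − x 0‖², …, ‖x n − x 0‖²)ᵀ`,
the point `p = x 0 + Σᵢ αᵢ (x (i+1) − x 0)` lies in the affine hull of the points and is
equidistant from all of them, i.e. it is the circumcenter. -/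
theorem circumcenter_formula_gram {H : Type*} [NormedAddCommGroup H]
    [InnerProductSpace ℝ H] [CompleteSpace H] (n : ℕ) (hn : 1 ≤ n)
    (x : Fin (n + 1) → H) (hx : AffineIndependent ℝ x)
    (G : Matrix (Fin n) (Fin n) ℝ)
    (hG : ∀ i j, G i j = ⟪x i.succ - x 0, x j.succ - x 0⟫)
    (α : Fin n → ℝ)
    (hα : α = (2 : ℝ)⁻¹ • G⁻¹.mulVec fun i => ‖x i.succ - x 0‖ ^ 2) :
    (x 0 + ∑ i, α i • (x i.succ - x 0)) ∈ affineSpan ℝ (Set.range x) ∧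
      ∃ r : ℝ, ∀ i, dist (x 0 + ∑ i, α i • (x i.succ - x 0)) (x i) = r :=
  circumcenter_formula_gram_general n x hx G hG α hα
end

section
/- Let S be a nonempty finite subset of a real Hilbert space H and suppose p ∈ aff(S) is equidistant from all points of S (so p is the circumcenter of S). Let K ⊆ S be nonempty with aff(K) = aff(S). Then p ∈ aff(K), p is equidistant from all points of K, and p is the unique point of aff(K) that is equidistant from all points of K; that is, the circumcenter of K exists and equals the circumcenter of S. -/
open EuclideanGeometry

section

variable {V P : Type*} [NormedAddCommGroup V] [InnerProductSpace ℝ V] [MetricSpace P]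
  [NormedAddTorsor V P]

/-- `p` and `q` both lie on the perpendicular bisector of every pair of points of `s`. -/
theorem isOrtho_vectorSpan_span_vsub_of_forall_dist_eq {s : Set P} {p q : P} {r r' : ℝ}
    (hp : ∀ a ∈ s, dist p a = r) (hq : ∀ a ∈ s, dist q a = r') :
    vectorSpan ℝ s ⟂ ℝ ∙ (q -ᵥ p) := by
  rw [vectorSpan_def, Submodule.isOrtho_span]
  rintro _ ⟨a, ha, b, hb, rfl⟩ _ rfl
  have hpab : dist b p = dist a p := by rw [dist_comm b, dist_comm a, hp a ha, hp b hb]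
  have hqab : dist b q = dist a q := by rw [dist_comm b, dist_comm a, hq a ha, hq b hb]
  rw [real_inner_comm]
  exact inner_vsub_vsub_of_dist_eq_of_dist_eq hpab hqab

theorem eq_of_mem_affineSpan_of_forall_dist_eq {s : Set P} {p q : P} {r r' : ℝ}
    (hps : p ∈ affineSpan ℝ s) (hqs : q ∈ affineSpan ℝ s)
    (hp : ∀ a ∈ s, dist p a = r) (hq : ∀ a ∈ s, dist q a = r') : q = p := by
  have hmem : q -ᵥ p ∈ vectorSpan ℝ s := by
    rw [← direction_affineSpan]
    exact AffineSubspace.vsub_mem_direction hqs hps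
  have hself : inner ℝ (q -ᵥ p) (q -ᵥ p) = 0 :=
    (isOrtho_vectorSpan_span_vsub_of_forall_dist_eq hp hq).inner_eq hmem
      (Submodule.mem_span_singleton_self _)
  rwa [inner_self_eq_zero, vsub_eq_zero_iff_eq] at hself

end

theorem circumcenter_of_spanning_subset_general {H : Type*} [NormedAddCommGroup H]
    [InnerProductSpace ℝ H] (S K : Set H) (hKS : K ⊆ S)
    (haff : affineSpan ℝ K = affineSpan ℝ S) (p : H)
    (hp : p ∈ affineSpan ℝ S) (hpr : ∃ r : ℝ, ∀ s ∈ S, dist p s = r) :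
    p ∈ affineSpan ℝ K ∧ (∃ r : ℝ, ∀ s ∈ K, dist p s = r) ∧
      ∀ q : H, q ∈ affineSpan ℝ K → (∃ r : ℝ, ∀ s ∈ K, dist q s = r) → q = p := by
  obtain ⟨r, hr⟩ := hpr
  have hpK : p ∈ affineSpan ℝ K := haff ▸ hp
  have hrK : ∀ s ∈ K, dist p s = r := fun s hs => hr s (hKS hs)
  refine ⟨hpK, ⟨r, hrK⟩, ?_⟩
  rintro q hqK ⟨r', hr'K⟩
  exact eq_of_mem_affineSpan_of_forall_dist_eq hpK hqK hrK hr'K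

/-- If `p` is the circumcenter of a nonempty finite set `S` in a real
Hilbert space, and `K ⊆ S` is nonempty with `aff(K) = aff(S)`, then `p ∈ aff(K)`, `p` is
equidistant from all points of `K`, and `p` is the unique such point; i.e. the
circumcenter of `K` exists and equals the circumcenter of `S`. -/
theorem circumcenter_of_spanning_subset {H : Type*} [NormedAddCommGroup H]
    [InnerProductSpace ℝ H] [CompleteSpace H] (S K : Set H) (hfin : S.Finite)
    (hSne : S.Nonempty) (hKS : K ⊆ S) (hKne : K.Nonempty)
    (haff : affineSpan ℝ K = affineSpan ℝ S) (p : H)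
    (hp : p ∈ affineSpan ℝ S) (hpr : ∃ r : ℝ, ∀ s ∈ S, dist p s = r) :
    p ∈ affineSpan ℝ K ∧ (∃ r : ℝ, ∀ s ∈ K, dist p s = r) ∧
      ∀ q : H, q ∈ affineSpan ℝ K → (∃ r : ℝ, ∀ s ∈ K, dist q s = r) → q = p :=
  circumcenter_of_spanning_subset_general S K hKS haff p hp hpr
end

section
/- Let S = {x₁, …, xₘ} be a finite subset of a real Hilbert space H admitting a circumcenter p (i.e., p ∈ aff(S) and ‖p − x₁‖ = ⋯ = ‖p − xₘ‖). Suppose x_{i₁}, …, x_{i_t} are elements of S such that x₁, x_{i₁}, …, x_{i_t} are affinely independent and aff{x₁, x_{i₁}, …, x_{i_t}} = aff(S). Define (γ₁, …, γ_t)ᵀ = (1/2) G(x_{i₁} − x₁, …, x_{i_t} − x₁)⁻¹ (‖x_{i₁} − x₁‖², …, ‖x_{i_t} − x₁‖²)ᵀ. Then p = x₁ + Σ_{j=1}^{t} γⱼ (x_{iⱼ} − x₁). -/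
/-!
Write `vⱼ = x (idx j) - x 0`. Since the spanning family is affinely independent, the `vⱼ` are
linearly independent and span the direction of `aff S`, so `p - x 0 = Σⱼ cⱼ vⱼ` for unique
coefficients `c`. Equidistance of `p` from `x 0` and `x (idx j)` says `⟪vⱼ, p - x 0⟫ = ‖vⱼ‖² / 2`,
i.e. `G c = ½ (‖vⱼ‖²)ⱼ` for the Gram matrix `G` of the `vⱼ`, which is invertible because the
`vⱼ` are linearly independent.
-/

open RealInnerProductSpace

section ConsFamily

variable {k V : Type*} [Ring k] [AddCommGroup V] [Module k V] {n : ℕ} {a : V} {v : Fin n → V}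

theorem AffineIndependent.linearIndependent_sub_of_cons
    (h : AffineIndependent k (Fin.cons a v : Fin (n + 1) → V)) :
    LinearIndependent k fun j => v j - a :=
  ((affineIndependent_iff_linearIndependent_vsub k _ 0).mp h).comp
    (fun j : Fin n => (⟨j.succ, Fin.succ_ne_zero j⟩ : {i : Fin (n + 1) // i ≠ 0}))
    (fun _ _ hij => Fin.succ_injective _ (congrArg Subtype.val hij))

variable (k a v) in
theorem vectorSpan_range_cons :
    vectorSpan k (Set.range (Fin.cons a v : Fin (n + 1) → V)) =
      Submodule.span k (Set.range fun j => v j - a) := by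
  have hsub : (fun i => (Fin.cons a v : Fin (n + 1) → V) i -ᵥ (Fin.cons a v : Fin (n + 1) → V) 0) =
      Fin.cons 0 fun j => v j - a := by
    funext i
    refine Fin.cases ?_ (fun j => ?_) i <;> simp
  rw [vectorSpan_range_eq_span_range_vsub_right k _ 0, hsub, Fin.range_cons,
    Submodule.span_insert_zero]

end ConsFamily

section InnerProductSpace

variable {H : Type*} [NormedAddCommGroup H] [InnerProductSpace ℝ H]

theorem inner_sub_sub_eq_half_norm_sq_of_dist_eq {p a b : H} (h : dist p a = dist p b) :
    ⟪b - a, p - a⟫ = ‖b - a‖ ^ 2 / 2 := by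
  have hperp := (AffineSubspace.mem_perpBisector_iff_inner_eq (c := p) (p₁ := a) (p₂ := b)).mp
    (AffineSubspace.mem_perpBisector_iff_dist_eq.mpr h)
  rwa [vsub_eq_sub, vsub_eq_sub, real_inner_comm, dist_comm, dist_eq_norm] at hperp

namespace Matrix

theorem gram_mulVec_apply {ι : Type*} [Fintype ι] (v : ι → H) (c : ι → ℝ) (i : ι) :
    (gram ℝ v *ᵥ c) i = ⟪v i, ∑ j, c j • v j⟫ := by
  simp only [mulVec, dotProduct, gram_apply, inner_sum, real_inner_smul_right, mul_comm]

theorem eq_inv_gram_mulVec_of_inner_sum_eq {ι : Type*} [Fintype ι] [DecidableEq ι]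
    {v : ι → H} (hv : LinearIndependent ℝ v) {c b : ι → ℝ}
    (h : ∀ i, ⟪v i, ∑ j, c j • v j⟫ = b i) :
    c = (gram ℝ v)⁻¹ *ᵥ b := by
  have hGc : gram ℝ v *ᵥ c = b := funext fun i => (gram_mulVec_apply v c i).trans (h i)
  have hdet : IsUnit (gram ℝ v).det :=
    isUnit_iff_ne_zero.mpr (det_gram_ne_zero_iff_linearIndependent.mpr hv)
  rw [← hGc, mulVec_mulVec, nonsing_inv_mul _ hdet, one_mulVec]

end Matrix

end InnerProductSpace

theorem circumcenter_eq_formula_on_spanning_subfamily_general {H : Type*} [NormedAddCommGroup H]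
    [InnerProductSpace ℝ H] (m t : ℕ) (x : Fin (m + 1) → H)
    (idx : Fin t → Fin (m + 1))
    (haff : AffineIndependent ℝ (Fin.cons (x 0) (fun j => x (idx j)) : Fin (t + 1) → H))
    (hspan : affineSpan ℝ (Set.range (Fin.cons (x 0) (fun j => x (idx j)) : Fin (t + 1) → H)) =
      affineSpan ℝ (Set.range x))
    (p : H) (hp : p ∈ affineSpan ℝ (Set.range x))
    (hpr : ∃ r : ℝ, ∀ i, dist p (x i) = r)
    (γ : Fin t → ℝ)
    (hγ : γ = (2 : ℝ)⁻¹ • ((Matrix.of fun i j : Fin t =>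
        ⟪x (idx i) - x 0, x (idx j) - x 0⟫ : Matrix (Fin t) (Fin t) ℝ)⁻¹).mulVec
        fun j => ‖x (idx j) - x 0‖ ^ 2) :
    p = x 0 + ∑ j, γ j • (x (idx j) - x 0) := by
  set v : Fin t → H := fun j => x (idx j) - x 0
  have hdir : p - x 0 ∈ Submodule.span ℝ (Set.range v) := by
    rw [← vectorSpan_range_cons, ← direction_affineSpan, hspan]
    exact AffineSubspace.vsub_mem_direction hp (mem_affineSpan ℝ ⟨0, rfl⟩)
  obtain ⟨c, hc⟩ := (Submodule.mem_span_range_iff_exists_fun ℝ).mp hdir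
  obtain ⟨r, hr⟩ := hpr
  have hinner : ∀ j, ⟪v j, ∑ k, c k • v k⟫ = (2 : ℝ)⁻¹ * ‖v j‖ ^ 2 := fun j => by
    rw [hc, inner_sub_sub_eq_half_norm_sq_of_dist_eq ((hr 0).trans (hr (idx j)).symm),
      div_eq_inv_mul]
  have hγc : γ = c := by
    rw [hγ, ← Matrix.mulVec_smul, Matrix.eq_inv_gram_mulVec_of_inner_sum_eq
      haff.linearIndependent_sub_of_cons hinner]
    rfl
  rw [hγc, hc, add_sub_cancel]

/-- Let `S = {x 0, …, x m}` admit a circumcenter `p`.  If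
`x (idx 1), …, x (idx t)` are elements of `S` such that
`x 0, x (idx 1), …, x (idx t)` are affinely independent and span the same affine hull
as `S`, then, with `γ = (1/2) G(x (idx j) − x 0)⁻¹ (‖x (idx j) − x 0‖²)ⱼ`,
one has `p = x 0 + Σⱼ γⱼ (x (idx j) − x 0)`. -/
theorem circumcenter_eq_formula_on_spanning_subfamily {H : Type*} [NormedAddCommGroup H]
    [InnerProductSpace ℝ H] [CompleteSpace H] (m t : ℕ) (x : Fin (m + 1) → H)
    (idx : Fin t → Fin (m + 1))
    (haff : AffineIndependent ℝ (Fin.cons (x 0) (fun j => x (idx j)) : Fin (t + 1) → H))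
    (hspan : affineSpan ℝ (Set.range (Fin.cons (x 0) (fun j => x (idx j)) : Fin (t + 1) → H)) =
      affineSpan ℝ (Set.range x))
    (p : H) (hp : p ∈ affineSpan ℝ (Set.range x))
    (hpr : ∃ r : ℝ, ∀ i, dist p (x i) = r)
    (γ : Fin t → ℝ)
    (hγ : γ = (2 : ℝ)⁻¹ • ((Matrix.of fun i j : Fin t =>
        ⟪x (idx i) - x 0, x (idx j) - x 0⟫ : Matrix (Fin t) (Fin t) ℝ)⁻¹).mulVec
        fun j => ‖x (idx j) - x 0‖ ^ 2) :
    p = x 0 + ∑ j, γ j • (x (idx j) - x 0) :=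
  circumcenter_eq_formula_on_spanning_subfamily_general m t x idx haff hspan p hp hpr γ hγ
end

section
/- Let m ≥ 2 and let x₁, …, xₘ be affinely independent points of a real Hilbert space H. Let A = G(x₂ − x₁, …, xₘ − x₁) be the Gram matrix of the differences, δ = det(A) (which is nonzero), a = (‖x₂ − x₁‖², …, ‖xₘ − x₁‖²)ᵀ, and for each i ∈ {1, …, m−1} let Aᵢ be the matrix obtained from A by replacing its i-th column with a, and set αᵢ = det(Aᵢ)/(2δ). Then the circumcenter of {x₁, …, xₘ} equals (1 − Σ_{i=1}^{m−1} αᵢ) x₁ + Σ_{i=1}^{m−1} αᵢ x_{i+1}; that is, this point lies in aff{x₁, …, xₘ} and is equidistant from x₁, …, xₘ. -/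
/-!
With `vᵢ = xᵢ₊₁ - x₀`, the candidate point is `p = x₀ + ∑ αᵢ vᵢ`, an affine combination of the
`xᵢ`. It is equidistant from `x₀` and `xᵢ₊₁` iff it lies on their perpendicular bisector, i.e.
`⟪p - x₀, vᵢ⟫ = ‖vᵢ‖² / 2`; for all `i` together this is the linear system `A α = a / 2`,
which Cramer's rule solves. `A` is the Gram matrix of the linearly independent `vᵢ`, so it is
positive definite and `det A ≠ 0`.
-/

open RealInnerProductSpace Matrix

theorem AffineIndependent.linearIndependent_vsub_zero {k V P : Type*} [Ring k] [AddCommGroup V]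
    [Module k V] [AddTorsor V P] {n : ℕ} {x : Fin (n + 1) → P} (hx : AffineIndependent k x) :
    LinearIndependent k fun i : Fin n => x i.succ -ᵥ x 0 := by
  have h := (affineIndependent_iff_linearIndependent_vsub k x 0).mp hx
  exact h.comp (fun i => ⟨i.succ, i.succ_ne_zero⟩)
    fun _ _ hij => Fin.succ_injective n (congrArg Subtype.val hij)

theorem Matrix.mulVec_updateCol_det_div {K ι : Type*} [Field K] [Fintype ι] [DecidableEq ι]
    (A : Matrix ι ι K) (b : ι → K) (c : K) (hA : A.det ≠ 0) :
    A *ᵥ (fun i => (A.updateCol i b).det / (c * A.det)) = c⁻¹ • b := by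
  have h_cramer : (fun i => (A.updateCol i b).det / (c * A.det)) = (c * A.det)⁻¹ • A.cramer b := by
    ext i
    simp [cramer_apply, div_eq_inv_mul]
  rw [h_cramer, mulVec_smul, mulVec_cramer, smul_smul, mul_inv, inv_mul_cancel_right₀ hA]

theorem real_inner_sum_smul_left_eq_gram_mulVec {E ι : Type*} [SeminormedAddCommGroup E]
    [InnerProductSpace ℝ E] [Fintype ι] (v : ι → E) (c : ι → ℝ) (j : ι) :
    ⟪∑ i, c i • v i, v j⟫ = (gram ℝ v *ᵥ c) j := by
  simp only [sum_inner, real_inner_smul_left, mulVec, dotProduct, gram_apply]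
  exact Finset.sum_congr rfl fun i _ => by rw [real_inner_comm, mul_comm]

theorem sub_smul_add_sum_smul_eq_sum_smul_sub_add {k V ι : Type*} [Ring k] [AddCommGroup V]
    [Module k V] [Fintype ι] (p : V) (y : ι → V) (c : ι → k) :
    (1 - ∑ i, c i) • p + ∑ i, c i • y i = ∑ i, c i • (y i - p) + p := by
  simp only [smul_sub, Finset.sum_sub_distrib, sub_smul, one_smul, ← Finset.sum_smul]
  abel

theorem sub_smul_add_sum_smul_mem_affineSpan {k V : Type*} [Ring k] [Nontrivial k]
    [AddCommGroup V] [Module k V] {n : ℕ} (x : Fin (n + 1) → V) (c : Fin n → k) :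
    (1 - ∑ i, c i) • x 0 + ∑ i, c i • x i.succ ∈ affineSpan k (Set.range x) := by
  have hw : ∑ i, (Fin.cons (1 - ∑ i, c i) c : Fin (n + 1) → k) i = 1 := by
    simp [Fin.sum_univ_succ]
  have h := affineCombination_mem_affineSpan (s := Finset.univ) hw x
  rwa [Finset.affineCombination_eq_linear_combination _ _ _ hw, Fin.sum_univ_succ] at h

theorem exists_dist_eq_of_inner_vsub_eq_dist_sq_div_two {V P : Type*} [NormedAddCommGroup V]
    [InnerProductSpace ℝ V] [MetricSpace P] [NormedAddTorsor V P] {n : ℕ}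
    (x : Fin (n + 1) → P) (p : P)
    (h : ∀ i : Fin n, ⟪p -ᵥ x 0, x i.succ -ᵥ x 0⟫ = dist (x 0) (x i.succ) ^ 2 / 2) :
    ∃ r, ∀ i, dist p (x i) = r := by
  refine ⟨dist p (x 0), Fin.cases rfl fun i => ?_⟩
  rw [eq_comm, ← AffineSubspace.mem_perpBisector_iff_dist_eq,
    AffineSubspace.mem_perpBisector_iff_inner_eq]
  exact h i

theorem circumcenter_cramer_formula_general {H : Type*} [NormedAddCommGroup H]
    [InnerProductSpace ℝ H] (n : ℕ)
    (x : Fin (n + 1) → H) (hx : AffineIndependent ℝ x)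
    (A : Matrix (Fin n) (Fin n) ℝ)
    (hA : ∀ i j, A i j = ⟪x i.succ - x 0, x j.succ - x 0⟫)
    (a : Fin n → ℝ) (ha : ∀ i, a i = ‖x i.succ - x 0‖ ^ 2)
    (α : Fin n → ℝ) (hα : ∀ i, α i = (A.updateCol i a).det / (2 * A.det)) :
    A.det ≠ 0 ∧
      ((1 - ∑ i, α i) • x 0 + ∑ i, α i • x i.succ) ∈ affineSpan ℝ (Set.range x) ∧
      ∃ r : ℝ, ∀ i, dist ((1 - ∑ i, α i) • x 0 + ∑ i, α i • x i.succ) (x i) = r := by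
  have hA_gram : A = gram ℝ fun i => x i.succ - x 0 := Matrix.ext hA
  have hdet : A.det ≠ 0 := by
    rw [hA_gram, det_gram_ne_zero_iff_linearIndependent]
    simpa only [vsub_eq_sub] using hx.linearIndependent_vsub_zero
  have hAα : A *ᵥ α = (2 : ℝ)⁻¹ • a := by
    rw [funext hα]
    exact A.mulVec_updateCol_det_div a 2 hdet
  refine ⟨hdet, sub_smul_add_sum_smul_mem_affineSpan x α,
    exists_dist_eq_of_inner_vsub_eq_dist_sq_div_two x _ fun j => ?_⟩
  rw [sub_smul_add_sum_smul_eq_sum_smul_sub_add, vsub_eq_sub, add_sub_cancel_right, vsub_eq_sub,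
    real_inner_sum_smul_left_eq_gram_mulVec, ← hA_gram, hAα, Pi.smul_apply, ha, dist_comm,
    dist_eq_norm, smul_eq_mul]
  ring

/-- Cramer-rule formula for the circumcenter: for `m = n + 1 ≥ 2`
affinely independent points `x 0, …, x n`, with `A` the Gram matrix of the differences,
`δ = det A` (nonzero), `a` the vector of squared norms of the differences, `Aᵢ` the
matrix `A` with column `i` replaced by `a`, and `αᵢ = det Aᵢ / (2δ)`, the point
`(1 − Σ αᵢ) x 0 + Σ αᵢ x (i+1)` lies in the affine hull and is equidistant from all the
points, i.e. it is the circumcenter. -/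
theorem circumcenter_cramer_formula {H : Type*} [NormedAddCommGroup H]
    [InnerProductSpace ℝ H] [CompleteSpace H] (n : ℕ) (hn : 1 ≤ n)
    (x : Fin (n + 1) → H) (hx : AffineIndependent ℝ x)
    (A : Matrix (Fin n) (Fin n) ℝ)
    (hA : ∀ i j, A i j = ⟪x i.succ - x 0, x j.succ - x 0⟫)
    (a : Fin n → ℝ) (ha : ∀ i, a i = ‖x i.succ - x 0‖ ^ 2)
    (α : Fin n → ℝ) (hα : ∀ i, α i = (A.updateCol i a).det / (2 * A.det)) :
    A.det ≠ 0 ∧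
      ((1 - ∑ i, α i) • x 0 + ∑ i, α i • x i.succ) ∈ affineSpan ℝ (Set.range x) ∧
      ∃ r : ℝ, ∀ i, dist ((1 - ∑ i, α i) • x 0 + ∑ i, α i • x i.succ) (x i) = r :=
  circumcenter_cramer_formula_general n x hx A hA a ha α hα
end

section
/- Let x, y, z be pairwise distinct points of a real Hilbert space H. Then x, y, z are affinely independent if and only if there exists a point p ∈ aff{x, y, z} with ‖p − x‖ = ‖p − y‖ = ‖p − z‖ (i.e., if and only if the circumcenter of {x, y, z} exists). -/
open EuclideanGeometry

theorem affineIndependent_iff_circumcenter_exists_general {H : Type*} [NormedAddCommGroup H]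
    [InnerProductSpace ℝ H] (x y z : H) (hxy : x ≠ y) (hyz : y ≠ z)
    (hxz : x ≠ z) :
    AffineIndependent ℝ ![x, y, z] ↔
      ∃ p : H, p ∈ affineSpan ℝ ({x, y, z} : Set H) ∧
        dist p x = dist p y ∧ dist p y = dist p z := by
  constructor
  · intro hind
    let t : Affine.Simplex ℝ H 2 := ⟨![x, y, z], hind⟩
    have hr : Set.range t.points = {x, y, z} := by
      rw [Matrix.range_cons, Matrix.range_cons_cons_empty, Set.singleton_union]
    have hdist := t.dist_circumcenter_eq_circumradius'
    exact ⟨t.circumcenter, hr ▸ t.circumcenter_mem_affineSpan,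
      (hdist 0).trans (hdist 1).symm, (hdist 1).trans (hdist 2).symm⟩
  · rintro ⟨p, -, hpxy, hpyz⟩
    have hcosph : Cospherical ({x, y, z} : Set H) :=
      ⟨p, dist p x, by simp [dist_comm _ p, hpxy, hpyz]⟩
    exact hcosph.affineIndependent_of_ne hxy hxz hyz

/-- Three pairwise distinct points `x, y, z` of a real Hilbert space are
affinely independent if and only if there is a point of `aff{x, y, z}` equidistant from
`x`, `y` and `z` (i.e. iff the circumcenter of `{x, y, z}` exists). -/
theorem affineIndependent_iff_circumcenter_exists {H : Type*} [NormedAddCommGroup H]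
    [InnerProductSpace ℝ H] [CompleteSpace H] (x y z : H) (hxy : x ≠ y) (hyz : y ≠ z)
    (hxz : x ≠ z) :
    AffineIndependent ℝ ![x, y, z] ↔
      ∃ p : H, p ∈ affineSpan ℝ ({x, y, z} : Set H) ∧
        dist p x = dist p y ∧ dist p y = dist p z :=
  affineIndependent_iff_circumcenter_exists_general x y z hxy hyz hxz
end

section
/- Let x, y, z be affinely independent points of a real Hilbert space H. Then the denominator D = 2(‖y − x‖²‖z − x‖² − ⟨y − x, z − x⟩²) is nonzero, and the point p = (‖y − z‖² ⟨x − z, x − y⟩ x + ‖x − z‖² ⟨y − z, y − x⟩ y + ‖x − y‖² ⟨z − x, z − y⟩ z) / D lies in aff{x, y, z} and satisfies ‖p − x‖ = ‖p − y‖ = ‖p − z‖; that is, p is the circumcenter of {x, y, z}. -/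
/-!
Put `u = y - x` and `v = z - x`. Affine independence makes `u, v` linearly independent, so
Cauchy–Schwarz is strict and the Gram determinant `D / 2 = ‖u‖²‖v‖² - ⟪u, v⟫²` is nonzero.
A point `p` is equidistant from `x` and `y` iff `2⟪p - x, u⟫ = ‖u‖²`, and from `x` and `z` iff
`2⟪p - x, v⟫ = ‖v‖²`; for `p - x = a • u + b • v` this is a linear system in `a, b`, solved by
Cramer's rule. The three weights in the formula for `p` sum to `D`, so that formula is
`x + a • u + b • v`.
-/

open RealInnerProductSpace

theorem AffineIndependent.linearIndependent_vsub_fin_three {k V P : Type*} [Ring k]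
    [AddCommGroup V] [Module k V] [AddTorsor V P] {p₀ p₁ p₂ : P}
    (h : AffineIndependent k ![p₀, p₁, p₂]) : LinearIndependent k ![p₁ -ᵥ p₀, p₂ -ᵥ p₀] := by
  rw [affineIndependent_iff_linearIndependent_vsub k _ 0,
    ← linearIndependent_equiv (finSuccAboveEquiv 0)] at h
  convert h using 1
  ext i
  fin_cases i <;> rfl

theorem smul_vsub_add_smul_vsub_vadd_mem_affineSpan {k V P : Type*} [Ring k]
    [AddCommGroup V] [Module k V] [AddTorsor V P] (a b : k) (p₀ p₁ p₂ : P) :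
    (a • (p₁ -ᵥ p₀) + b • (p₂ -ᵥ p₀)) +ᵥ p₀ ∈ affineSpan k {p₀, p₁, p₂} := by
  have vsub_mem_direction {p : P} (hp : p ∈ ({p₀, p₁, p₂} : Set P)) :
      p -ᵥ p₀ ∈ (affineSpan k {p₀, p₁, p₂}).direction := by
    rw [direction_affineSpan]
    exact vsub_mem_vectorSpan k hp (by simp)
  refine AffineSubspace.vadd_mem_of_mem_direction
    (add_mem (Submodule.smul_mem _ _ ?_) (Submodule.smul_mem _ _ ?_)) (mem_affineSpan k (by simp))
  · exact vsub_mem_direction (by simp)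
  · exact vsub_mem_direction (by simp)

section InnerProductSpace

variable {F : Type*} [NormedAddCommGroup F] [InnerProductSpace ℝ F]

theorem sq_inner_lt_norm_sq_mul_norm_sq {u v : F} (h : LinearIndependent ℝ ![u, v]) :
    ⟪u, v⟫ ^ 2 < ‖u‖ ^ 2 * ‖v‖ ^ 2 := by
  rw [← mul_pow, ← sq_abs]
  refine pow_lt_pow_left₀ ((abs_real_inner_le_norm u v).lt_of_ne fun heq => ?_)
    (abs_nonneg _) two_ne_zero
  rcases ((norm_inner_eq_norm_tfae ℝ u v).out 0 2).mp heq with hu | ⟨r, rfl⟩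
  · exact h.ne_zero 0 hu
  · have := LinearIndependent.pair_iff.mp h r (-1) (by simp)
    norm_num at this

theorem dist_eq_dist_iff_two_inner_eq_norm_sq (p x y : F) :
    dist p x = dist p y ↔ 2 * ⟪p - x, y - x⟫ = ‖y - x‖ ^ 2 := by
  have hpy : ‖p - y‖ ^ 2 = ‖p - x‖ ^ 2 - 2 * ⟪p - x, y - x⟫ + ‖y - x‖ ^ 2 := by
    rw [← norm_sub_sq_real, sub_sub_sub_cancel_right]
  rw [dist_eq_norm, dist_eq_norm, ← sq_eq_sq₀ (norm_nonneg _) (norm_nonneg _), hpy]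
  constructor <;> intro h <;> linarith

/-- The circumcenter of `0, u, v`; junk `0` when `u, v` are linearly dependent. -/
noncomputable def circumvector (u v : F) : F :=
  (‖v‖ ^ 2 * ⟪u - v, u⟫ / (2 * (‖u‖ ^ 2 * ‖v‖ ^ 2 - ⟪u, v⟫ ^ 2))) • u +
    (‖u‖ ^ 2 * ⟪v, v - u⟫ / (2 * (‖u‖ ^ 2 * ‖v‖ ^ 2 - ⟪u, v⟫ ^ 2))) • v

variable {u v : F}

theorem two_inner_circumvector_left (h : ‖u‖ ^ 2 * ‖v‖ ^ 2 - ⟪u, v⟫ ^ 2 ≠ 0) :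
    2 * ⟪circumvector u v, u⟫ = ‖u‖ ^ 2 :=
  calc 2 * ⟪circumvector u v, u⟫
      = ‖u‖ ^ 2 * (2 * (‖u‖ ^ 2 * ‖v‖ ^ 2 - ⟪u, v⟫ ^ 2)) /
          (2 * (‖u‖ ^ 2 * ‖v‖ ^ 2 - ⟪u, v⟫ ^ 2)) := by
        simp only [circumvector, inner_add_left, real_inner_smul_left, inner_sub_left,
          inner_sub_right, real_inner_self_eq_norm_sq, real_inner_comm u v]
        ring
    _ = ‖u‖ ^ 2 := mul_div_cancel_right₀ _ (mul_ne_zero two_ne_zero h)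

theorem two_inner_circumvector_right (h : ‖u‖ ^ 2 * ‖v‖ ^ 2 - ⟪u, v⟫ ^ 2 ≠ 0) :
    2 * ⟪circumvector u v, v⟫ = ‖v‖ ^ 2 :=
  calc 2 * ⟪circumvector u v, v⟫
      = ‖v‖ ^ 2 * (2 * (‖u‖ ^ 2 * ‖v‖ ^ 2 - ⟪u, v⟫ ^ 2)) /
          (2 * (‖u‖ ^ 2 * ‖v‖ ^ 2 - ⟪u, v⟫ ^ 2)) := by
        simp only [circumvector, inner_add_left, real_inner_smul_left, inner_sub_left,
          inner_sub_right, real_inner_self_eq_norm_sq, real_inner_comm u v]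
        ring
    _ = ‖v‖ ^ 2 := mul_div_cancel_right₀ _ (mul_ne_zero two_ne_zero h)

theorem circumcenter_weights_sum (x y z : F) :
    ‖y - z‖ ^ 2 * ⟪x - z, x - y⟫ + ‖x - z‖ ^ 2 * ⟪y - z, y - x⟫ +
        ‖x - y‖ ^ 2 * ⟪z - x, z - y⟫ =
      2 * (‖y - x‖ ^ 2 * ‖z - x‖ ^ 2 - ⟪y - x, z - x⟫ ^ 2) := by
  obtain ⟨u, rfl⟩ : ∃ u, y = x + u := ⟨y - x, by abel⟩
  obtain ⟨v, rfl⟩ : ∃ v, z = x + v := ⟨z - x, by abel⟩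
  simp only [add_sub_cancel_left, sub_add_cancel_left, add_sub_add_left_eq_sub, norm_neg,
    norm_sub_sq_real, inner_sub_left, inner_sub_right, inner_neg_left, inner_neg_right,
    real_inner_self_eq_norm_sq, real_inner_comm u v]
  ring

theorem inv_smul_weighted_sum_eq_add_circumvector (x y z : F)
    (h : ‖y - x‖ ^ 2 * ‖z - x‖ ^ 2 - ⟪y - x, z - x⟫ ^ 2 ≠ 0) :
    (2 * (‖y - x‖ ^ 2 * ‖z - x‖ ^ 2 - ⟪y - x, z - x⟫ ^ 2))⁻¹ •
        ((‖y - z‖ ^ 2 * ⟪x - z, x - y⟫) • x + (‖x - z‖ ^ 2 * ⟪y - z, y - x⟫) • y +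
          (‖x - y‖ ^ 2 * ⟪z - x, z - y⟫) • z) =
      x + circumvector (y - x) (z - x) := by
  have hsum := circumcenter_weights_sum x y z
  obtain ⟨u, rfl⟩ : ∃ u, y = x + u := ⟨y - x, by abel⟩
  obtain ⟨v, rfl⟩ : ∃ v, z = x + v := ⟨z - x, by abel⟩
  simp only [add_sub_cancel_left, sub_add_cancel_left, add_sub_add_left_eq_sub, norm_neg,
    circumvector] at h hsum ⊢
  match_scalars <;> field_simp
  exact hsum

end InnerProductSpace

theorem circumcenter_three_points_formula_general {H : Type*} [NormedAddCommGroup H]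
    [InnerProductSpace ℝ H] (x y z : H)
    (hx : AffineIndependent ℝ ![x, y, z])
    (D : ℝ) (hD : D = 2 * (‖y - x‖ ^ 2 * ‖z - x‖ ^ 2 - ⟪y - x, z - x⟫ ^ 2))
    (p : H)
    (hp : p = D⁻¹ • ((‖y - z‖ ^ 2 * ⟪x - z, x - y⟫) • x +
      (‖x - z‖ ^ 2 * ⟪y - z, y - x⟫) • y + (‖x - y‖ ^ 2 * ⟪z - x, z - y⟫) • z)) :
    D ≠ 0 ∧ p ∈ affineSpan ℝ ({x, y, z} : Set H) ∧
      dist p x = dist p y ∧ dist p y = dist p z := by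
  have hG : ‖y - x‖ ^ 2 * ‖z - x‖ ^ 2 - ⟪y - x, z - x⟫ ^ 2 ≠ 0 :=
    (sub_pos.mpr (sq_inner_lt_norm_sq_mul_norm_sq hx.linearIndependent_vsub_fin_three)).ne'
  have hpx : p = circumvector (y - x) (z - x) + x := by
    rw [hp, hD, inv_smul_weighted_sum_eq_add_circumvector x y z hG, add_comm]
  have hxy : dist p x = dist p y := by
    rw [dist_eq_dist_iff_two_inner_eq_norm_sq, hpx, add_sub_cancel_right]
    exact two_inner_circumvector_left hG
  have hxz : dist p x = dist p z := by
    rw [dist_eq_dist_iff_two_inner_eq_norm_sq, hpx, add_sub_cancel_right]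
    exact two_inner_circumvector_right hG
  refine ⟨by rw [hD]; exact mul_ne_zero two_ne_zero hG, ?_, hxy, hxy.symm.trans hxz⟩
  rw [hpx]
  exact smul_vsub_add_smul_vsub_vadd_mem_affineSpan _ _ x y z

/-- For affinely independent points `x, y, z` of a real Hilbert space,
the denominator `D = 2(‖y − x‖²‖z − x‖² − ⟨y − x, z − x⟩²)` is nonzero and the point
`p = D⁻¹ (‖y − z‖² ⟨x − z, x − y⟩ x + ‖x − z‖² ⟨y − z, y − x⟩ y + ‖x − y‖² ⟨z − x, z − y⟩ z)`
lies in `aff{x, y, z}` and is equidistant from `x`, `y`, `z`; i.e. `p` is the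
circumcenter of `{x, y, z}`. -/
theorem circumcenter_three_points_formula {H : Type*} [NormedAddCommGroup H]
    [InnerProductSpace ℝ H] [CompleteSpace H] (x y z : H)
    (hx : AffineIndependent ℝ ![x, y, z])
    (D : ℝ) (hD : D = 2 * (‖y - x‖ ^ 2 * ‖z - x‖ ^ 2 - ⟪y - x, z - x⟫ ^ 2))
    (p : H)
    (hp : p = D⁻¹ • ((‖y - z‖ ^ 2 * ⟪x - z, x - y⟫) • x +
      (‖x - z‖ ^ 2 * ⟪y - z, y - x⟫) • y + (‖x - y‖ ^ 2 * ⟪z - x, z - y⟫) • z)) :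
    D ≠ 0 ∧ p ∈ affineSpan ℝ ({x, y, z} : Set H) ∧
      dist p x = dist p y ∧ dist p y = dist p z :=
  circumcenter_three_points_formula_general x y z hx D hD p hp
end
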